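/- For the path graph P_n on n ≥ 4 vertices, the harmonic index of its total graph satisfies H(T(P_n)) = n − 269/420. -/

import Mathlib

open scoped Classical

/-- The total graph `T(G)` of a simple graph `G`: its vertex set is `V(G) ∪ E(G)`,
and two vertices of `T(G)` are adjacent iff the corresponding elements of `G`
are adjacent vertices, adjacent (distinct, sharing an endpoint) edges, or an
incident vertex–edge pair. -/
def SimpleGraph.totalGraph {V : Type*} (G : SimpleGraph V) :
    SimpleGraph (V ⊕ G.edgeSet) where
  Adj x y :=
    match x, y with
    | Sum.inl u, Sum.inl v => G.Adj u v
    | Sum.inl u, Sum.inr e => u ∈ (e : Sym2 V)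
    | Sum.inr e, Sum.inl u => u ∈ (e : Sym2 V)
    | Sum.inr e, Sum.inr f => e ≠ f ∧ ∃ v, v ∈ (e : Sym2 V) ∧ v ∈ (f : Sym2 V)
  symm := by
    refine ⟨?_⟩
    rintro (u | e) (v | f) h
    · exact h.symm
    · exact h
    · exact h
    · exact ⟨h.1.symm, h.2.imp fun v hv => ⟨hv.2, hv.1⟩⟩
  loopless := by
    refine ⟨?_⟩
    rintro (u | e) h
    · exact G.irrefl h
    · exact h.1 rfl

/-- The harmonic index `H(G) = ∑_{uv ∈ E(G)} 2 / (deg u + deg v)`. -/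
noncomputable def SimpleGraph.harmonicIndex {V : Type*} [Fintype V] (G : SimpleGraph V) : ℝ :=
  ∑ e ∈ G.edgeFinset,
    Sym2.lift ⟨fun u v => 2 / ((G.degree u : ℝ) + (G.degree v : ℝ)),
      fun u v => by simp [add_comm]⟩ e

/-!
Number the vertex `i` of `P_n` by `2i` and the edge `{i, i+1}` by `2i+1`. Two elements of `T(P_n)`
are adjacent exactly when their numbers differ by 1 or 2, so `T(P_n)` is isomorphic to the square
`P_N²` of the path on `N = 2n - 1` vertices. The degrees in `P_N²` read `2, 3, 4, …, 4, 3, 2`, so for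
`N ≥ 6` its `N - 1` edges between consecutive vertices contribute `4/5 + 4/7 + (N - 5)/4` to the
harmonic index and its `N - 2` edges between vertices at distance two contribute
`2/3 + 4/7 + (N - 6)/4`; the total is `n - 269/420`.
-/

open Finset

namespace SimpleGraph

theorem Iso.harmonicIndex_eq {V W : Type*} [Fintype V] [Fintype W] {G : SimpleGraph V}
    {G' : SimpleGraph W} (f : G ≃g G') : G.harmonicIndex = G'.harmonicIndex := by
  refine sum_nbij' (Sym2.map f) (Sym2.map f.symm) ?_ ?_ ?_ ?_ ?_
  · exact fun e he => by simpa using f.map_mem_edgeSet_iff.2 (mem_edgeFinset.1 he)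
  · exact fun e he => by simpa using f.symm.map_mem_edgeSet_iff.2 (mem_edgeFinset.1 he)
  · exact fun e _ => by simp [Sym2.map_map]
  · exact fun e _ => by simp [Sym2.map_map]
  · intro e _
    induction e using Sym2.ind with
    | _ u v => simp

theorem sum_edgeFinset_eq_sum_sum_lt {V M : Type*} [Fintype V] [LinearOrder V] [AddCommMonoid M]
    (G : SimpleGraph V) [Fintype G.edgeSet] [DecidableRel G.Adj] (f : Sym2 V → M) :
    ∑ e ∈ G.edgeFinset, f e = ∑ i, ∑ j, if i < j ∧ G.Adj i j then f s(i, j) else 0 := by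
  have hE : G.edgeFinset =
      ({e ∈ (univ : Finset V).sym2 | ¬e.IsDiag}).filter (· ∈ G.edgeSet) := by
    ext e
    simp only [mem_edgeFinset, mem_filter, mem_sym2_iff, mem_univ,
      implies_true, true_and]
    exact ⟨fun h => ⟨G.not_isDiag_of_mem_edgeSet h, h⟩, And.right⟩
  rw [hE, sum_filter, sum_sym2_filter_not_isDiag, ← sum_product']
  have hlt : {p ∈ (univ : Finset V).offDiag | p.1 < p.2} =
      univ.filter (fun p : V × V => p.1 < p.2) := by
    ext p
    simpa using ne_of_lt
  rw [hlt, sum_filter, univ_product_univ]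
  simp only [mem_edgeSet, ite_and]

theorem sum_fin_sum_fin_ite_eq_add {M : Type*} [AddCommMonoid M] (N d : ℕ)
    (f : ℕ → ℕ → M) :
    ∑ i : Fin N, ∑ j : Fin N, (if (j : ℕ) = i + d then f i j else 0) =
      ∑ i ∈ range (N - d), f i (i + d) := by
  calc ∑ i : Fin N, ∑ j : Fin N, (if (j : ℕ) = i + d then f i j else 0)
      = ∑ i : Fin N, ∑ j ∈ range N, (if j = i + d then f i j else 0) :=
        sum_congr rfl fun i _ =>
          Fin.sum_univ_eq_sum_range (fun j => if j = i + d then f i j else 0) N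
    _ = ∑ i ∈ range N, ∑ j ∈ range N, (if j = i + d then f i j else 0) :=
        Fin.sum_univ_eq_sum_range
          (fun i => ∑ j ∈ range N, if j = i + d then f i j else 0) N
    _ = ∑ i ∈ range (N - d), f i (i + d) := by
        simp only [sum_ite_eq', ← sum_filter]
        congr 1
        ext i
        simp only [mem_filter, mem_range]
        omega

def pathSquare (N : ℕ) : SimpleGraph (Fin N) where
  Adj i j := (i : ℕ) ≠ j ∧ (i : ℕ) ≤ j + 2 ∧ (j : ℕ) ≤ i + 2
  symm := ⟨fun _ _ h => ⟨h.1.symm, h.2.2, h.2.1⟩⟩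
  loopless := ⟨fun _ h => h.1 rfl⟩

@[simp]
theorem pathSquare_adj {N : ℕ} {i j : Fin N} :
    (pathSquare N).Adj i j ↔ (i : ℕ) ≠ j ∧ (i : ℕ) ≤ j + 2 ∧ (j : ℕ) ≤ i + 2 :=
  Iff.rfl

def pathSquareDegree (N i : ℕ) : ℕ := min i 2 + min (N - 1 - i) 2

theorem degree_pathSquare {N : ℕ} (i : Fin N) :
    (pathSquare N).degree i = pathSquareDegree N i := by
  have hnbr : ((pathSquare N).neighborFinset i).map Fin.valEmbedding =
      (Icc ((i : ℕ) - 2) (min ((i : ℕ) + 2) (N - 1))).erase (i : ℕ) := by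
    ext k
    simp only [mem_map, mem_neighborFinset, pathSquare_adj, Fin.valEmbedding_apply,
      mem_erase, mem_Icc]
    constructor
    · rintro ⟨j, hj, rfl⟩
      omega
    · intro hk
      exact ⟨⟨k, by omega⟩, by simp only; omega, rfl⟩
  rw [← card_neighborFinset_eq_degree, ← card_map Fin.valEmbedding, hnbr,
    card_erase_of_mem (by simp; omega), Nat.card_Icc, pathSquareDegree]
  omega

theorem harmonicIndex_pathSquare (N : ℕ) :
    (pathSquare N).harmonicIndex =
      ∑ i ∈ range (N - 1),
          2 / (pathSquareDegree N i + pathSquareDegree N (i + 1) : ℝ) +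
        ∑ i ∈ range (N - 2),
          2 / (pathSquareDegree N i + pathSquareDegree N (i + 2) : ℝ) := by
  have hsummand : ∀ i j : Fin N,
      (if i < j ∧ (pathSquare N).Adj i j then
        Sym2.lift ⟨fun u v => 2 / (((pathSquare N).degree u : ℝ) + ((pathSquare N).degree v : ℝ)),
          fun u v => by simp [add_comm]⟩ s(i, j) else 0) =
      (if (j : ℕ) = i + 1 then 2 / (pathSquareDegree N i + pathSquareDegree N j : ℝ) else 0) +
        (if (j : ℕ) = i + 2 then 2 / (pathSquareDegree N i + pathSquareDegree N j : ℝ) else 0) := by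
    intro i j
    simp only [Sym2.lift_mk, degree_pathSquare, pathSquare_adj, Fin.lt_def]
    split_ifs <;> first | omega | simp
  rw [harmonicIndex, sum_edgeFinset_eq_sum_sum_lt]
  simp only [hsummand, sum_add_distrib]
  exact congrArg₂ (· + ·)
    (sum_fin_sum_fin_ite_eq_add N 1 fun i j =>
      2 / (pathSquareDegree N i + pathSquareDegree N j : ℝ))
    (sum_fin_sum_fin_ite_eq_add N 2 fun i j =>
      2 / (pathSquareDegree N i + pathSquareDegree N j : ℝ))

theorem sum_range_add_four_eq_of_eq_const {M : Type*} [AddCommMonoid M] (f : ℕ → M) (k : ℕ)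
    (c : M) (hf : ∀ i, 2 ≤ i → i < k + 2 → f i = c) :
    ∑ i ∈ range (k + 4), f i = f 0 + f 1 + k • c + f (k + 2) + f (k + 3) := by
  have hmid : ∑ i ∈ range k, f (i + 2) = k • c := by
    rw [sum_congr rfl fun i hi => hf (i + 2) (by omega) (by simp at hi; omega),
      sum_const, card_range]
  rw [sum_range_succ, sum_range_succ, sum_range_succ',
    sum_range_succ', hmid]
  abel

theorem harmonicIndex_pathSquare_add_six (M : ℕ) :
    (pathSquare (M + 6)).harmonicIndex = (2 * M + 1) / 4 + 274 / 105 := by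
  have hδ : ∀ i, 2 ≤ i → i ≤ M + 3 → pathSquareDegree (M + 6) i = 4 := by
    intro i _ _
    unfold pathSquareDegree
    omega
  have hδ₀ : pathSquareDegree (M + 6) 0 = 2 := by unfold pathSquareDegree; omega
  have hδ₁ : pathSquareDegree (M + 6) 1 = 3 := by unfold pathSquareDegree; omega
  have hδ₄ : pathSquareDegree (M + 6) (M + 4) = 3 := by unfold pathSquareDegree; omega
  have hδ₅ : pathSquareDegree (M + 6) (M + 5) = 2 := by unfold pathSquareDegree; omega
  rw [harmonicIndex_pathSquare, show M + 6 - 1 = (M + 1) + 4 by omega,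
    show M + 6 - 2 = M + 4 by omega,
    sum_range_add_four_eq_of_eq_const _ (M + 1) (1 / 4)
      fun i h₁ h₂ => by rw [hδ i h₁ (by omega), hδ (i + 1) (by omega) (by omega)]; norm_num,
    sum_range_add_four_eq_of_eq_const _ M (1 / 4)
      fun i h₁ h₂ => by rw [hδ i h₁ (by omega), hδ (i + 2) (by omega) (by omega)]; norm_num]
  simp only [Nat.add_assoc, Nat.reduceAdd, hδ₀, hδ₁, hδ₄, hδ₅, hδ 2 le_rfl (by omega),
    hδ 3 (by omega) (by omega), hδ (M + 2) (by omega) (by omega), hδ (M + 3) (by omega) le_rfl]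
  norm_num
  ring

section totalGraph

variable {V : Type*} (G : SimpleGraph V)

@[simp]
theorem totalGraph_adj_inl_inl (u v : V) : G.totalGraph.Adj (.inl u) (.inl v) ↔ G.Adj u v :=
  Iff.rfl

@[simp]
theorem totalGraph_adj_inl_inr (u : V) (e : G.edgeSet) :
    G.totalGraph.Adj (.inl u) (.inr e) ↔ u ∈ (e : Sym2 V) :=
  Iff.rfl

@[simp]
theorem totalGraph_adj_inr_inl (e : G.edgeSet) (u : V) :
    G.totalGraph.Adj (.inr e) (.inl u) ↔ u ∈ (e : Sym2 V) :=
  Iff.rfl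

@[simp]
theorem totalGraph_adj_inr_inr (e f : G.edgeSet) :
    G.totalGraph.Adj (.inr e) (.inr f) ↔ e ≠ f ∧ ∃ v, v ∈ (e : Sym2 V) ∧ v ∈ (f : Sym2 V) :=
  Iff.rfl

end totalGraph

theorem exists_eq_sym2_of_mem_edgeSet_pathGraph {n : ℕ} {e : Sym2 (Fin n)}
    (he : e ∈ (pathGraph n).edgeSet) : ∃ a b : Fin n, (b : ℕ) = a + 1 ∧ e = s(a, b) := by
  induction e using Sym2.ind with
  | _ u v =>
    rcases pathGraph_adj.1 he with h | h
    · exact ⟨u, v, h.symm, rfl⟩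
    · exact ⟨v, u, h.symm, Sym2.eq_swap⟩

def totalGraphPathIndex (n : ℕ) : Fin n ⊕ (pathGraph n).edgeSet → ℕ
  | .inl v => 2 * v
  | .inr e => Sym2.lift ⟨fun a b : Fin n => (a : ℕ) + b, fun _ _ => Nat.add_comm _ _⟩ e

theorem totalGraph_pathGraph_adj_iff {n : ℕ} (x y : Fin n ⊕ (pathGraph n).edgeSet) :
    (pathGraph n).totalGraph.Adj x y ↔
      totalGraphPathIndex n x ≠ totalGraphPathIndex n y ∧
        totalGraphPathIndex n x ≤ totalGraphPathIndex n y + 2 ∧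
        totalGraphPathIndex n y ≤ totalGraphPathIndex n x + 2 := by
  rcases x with u | ⟨e, he⟩ <;> rcases y with v | ⟨f, hf⟩
  · simp only [totalGraph_adj_inl_inl, pathGraph_adj, totalGraphPathIndex]
    omega
  · obtain ⟨a, b, hab, rfl⟩ := exists_eq_sym2_of_mem_edgeSet_pathGraph hf
    simp only [totalGraph_adj_inl_inr, Sym2.mem_iff, Fin.ext_iff, totalGraphPathIndex,
      Sym2.lift_mk]
    omega
  · obtain ⟨a, b, hab, rfl⟩ := exists_eq_sym2_of_mem_edgeSet_pathGraph he
    simp only [totalGraph_adj_inr_inl, Sym2.mem_iff, Fin.ext_iff, totalGraphPathIndex,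
      Sym2.lift_mk]
    omega
  · obtain ⟨a, b, hab, rfl⟩ := exists_eq_sym2_of_mem_edgeSet_pathGraph he
    obtain ⟨c, d, hcd, rfl⟩ := exists_eq_sym2_of_mem_edgeSet_pathGraph hf
    simp only [totalGraph_adj_inr_inr, ne_eq, Subtype.mk.injEq, Sym2.eq_iff, Sym2.mem_iff,
      Fin.ext_iff, totalGraphPathIndex, Sym2.lift_mk]
    constructor
    · rintro ⟨hne, v, hv₁, hv₂⟩
      omega
    · intro h
      rcases Nat.lt_or_gt_of_ne h.1 with hlt | hlt
      · exact ⟨by omega, b, by omega⟩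
      · exact ⟨by omega, a, by omega⟩

theorem totalGraphPathIndex_lt {n : ℕ} (x : Fin n ⊕ (pathGraph n).edgeSet) :
    totalGraphPathIndex n x < 2 * n - 1 := by
  rcases x with u | ⟨e, he⟩
  · simp only [totalGraphPathIndex]
    omega
  · obtain ⟨a, b, hab, rfl⟩ := exists_eq_sym2_of_mem_edgeSet_pathGraph he
    simp only [totalGraphPathIndex, Sym2.lift_mk]
    omega

theorem totalGraphPathIndex_injective (n : ℕ) : Function.Injective (totalGraphPathIndex n) := by
  rintro (u | ⟨e, he⟩) (v | ⟨f, hf⟩) h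
  · simp only [totalGraphPathIndex] at h
    exact congrArg Sum.inl (Fin.ext (by omega))
  · obtain ⟨c, d, hcd, rfl⟩ := exists_eq_sym2_of_mem_edgeSet_pathGraph hf
    simp only [totalGraphPathIndex, Sym2.lift_mk] at h
    omega
  · obtain ⟨a, b, hab, rfl⟩ := exists_eq_sym2_of_mem_edgeSet_pathGraph he
    simp only [totalGraphPathIndex, Sym2.lift_mk] at h
    omega
  · obtain ⟨a, b, hab, rfl⟩ := exists_eq_sym2_of_mem_edgeSet_pathGraph he
    obtain ⟨c, d, hcd, rfl⟩ := exists_eq_sym2_of_mem_edgeSet_pathGraph hf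
    simp only [totalGraphPathIndex, Sym2.lift_mk] at h
    have hac : a = c := Fin.ext (by omega)
    have hbd : b = d := Fin.ext (by omega)
    subst hac hbd
    rfl

theorem exists_totalGraphPathIndex_eq {n k : ℕ} (hk : k < 2 * n - 1) :
    ∃ x, totalGraphPathIndex n x = k := by
  rcases Nat.even_or_odd' k with ⟨i, rfl | rfl⟩
  · exact ⟨.inl ⟨i, by omega⟩, rfl⟩
  · refine ⟨.inr ⟨s(⟨i, by omega⟩, ⟨i + 1, by omega⟩), pathGraph_adj.2 (.inl rfl)⟩, ?_⟩
    simp only [totalGraphPathIndex, Sym2.lift_mk]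
    omega

noncomputable def totalGraphPathGraphIso (n : ℕ) :
    (pathGraph n).totalGraph ≃g pathSquare (2 * n - 1) where
  toEquiv := Equiv.ofBijective (fun x => ⟨totalGraphPathIndex n x, totalGraphPathIndex_lt x⟩)
    ⟨fun _ _ h => totalGraphPathIndex_injective n (Fin.val_eq_of_eq h),
      fun k => (exists_totalGraphPathIndex_eq k.isLt).imp fun _ h => Fin.ext h⟩
  map_rel_iff' {x y} := (totalGraph_pathGraph_adj_iff x y).symm

end SimpleGraph

/-- For the path graph `P_n` on `n ≥ 4` vertices, `H(T(P_n)) = n - 269/420`. -/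
theorem harmonicIndex_totalGraph_pathGraph (n : ℕ) (hn : 4 ≤ n) :
    (SimpleGraph.pathGraph n).totalGraph.harmonicIndex = (n : ℝ) - 269 / 420 := by
  obtain ⟨M, rfl⟩ : ∃ M, n = M + 4 := ⟨n - 4, by omega⟩
  rw [(SimpleGraph.totalGraphPathGraphIso (M + 4)).harmonicIndex_eq,
    show 2 * (M + 4) - 1 = (2 * M + 1) + 6 by omega, SimpleGraph.harmonicIndex_pathSquare_add_six]
  push_cast
  ring
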